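/- Let A ∈ ℝ^{n×n}, B ∈ ℝ^{n×m}, C ∈ ℝ^{p×n}. Let Ū ∈ St(r,n) satisfy (I_n − ŪŪᵀ)·A·Ū = 0, let V̄ ∈ St(r,n) satisfy (I_n − V̄V̄ᵀ)·Aᵀ·V̄ = 0, and suppose R := V̄ᵀŪ is invertible. Set A_Ū := ŪᵀAŪ, A_V̄ := V̄ᵀAV̄, B_V̄ := V̄ᵀB, C_Ū := CŪ (all viewed as complex matrices). Then for every s ∈ ℂ such that s·I_r − A_Ū is invertible, the matrix s·I_r − A_V̄ is also invertible and C_Ū·(s·I_r − A_Ū)⁻¹·R⁻¹·B_V̄ = C_Ū·R⁻¹·(s·I_r − A_V̄)⁻¹·B_V̄; that is, the two reduced-order models (A_Ū, R⁻¹B_V̄, C_Ū) and (A_V̄, B_V̄, C_ŪR⁻¹) have the same transfer function. -/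

import Mathlib

/-!
The equilibrium conditions say `AŪ = Ū A_Ū` and `V̄ᵀA = A_V̄ V̄ᵀ`; multiplying them out
gives `R A_Ū = A_V̄ R`. Hence `sI − A_V̄ = R (sI − A_Ū) R⁻¹`: the two reduced models are
realizations similar through the invertible matrix `R`, and similar realizations have the
same transfer function.
-/

open Matrix

namespace Matrix

variable {ι κ : Type*} [Fintype ι] [Fintype κ] [DecidableEq ι]

theorem mul_eq_mul_of_oja_equilibrium {α : Type*} [Ring α] {A : Matrix ι ι α}
    {U : Matrix ι κ α}
    (h : (1 - U * Uᵀ) * A * U = 0) : A * U = U * (Uᵀ * A * U) := by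
  rw [Matrix.sub_mul, Matrix.one_mul, Matrix.sub_mul, sub_eq_zero] at h
  simpa only [Matrix.mul_assoc] using h

theorem transpose_mul_eq_of_oja_equilibrium {α : Type*} [CommRing α] {A : Matrix ι ι α}
    {V : Matrix ι κ α} (h : (1 - V * Vᵀ) * Aᵀ * V = 0) : Vᵀ * A = Vᵀ * A * V * Vᵀ := by
  simpa only [transpose_mul, transpose_transpose, Matrix.mul_assoc] using
    congrArg transpose (mul_eq_mul_of_oja_equilibrium h)

theorem oja_equilibria_intertwine {α : Type*} [CommRing α] {A : Matrix ι ι α}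
    {U V : Matrix ι κ α} (hU : (1 - U * Uᵀ) * A * U = 0)
    (hV : (1 - V * Vᵀ) * Aᵀ * V = 0) :
    Vᵀ * U * (Uᵀ * A * U) = Vᵀ * A * V * (Vᵀ * U) :=
  calc Vᵀ * U * (Uᵀ * A * U) = Vᵀ * (A * U) := by
        rw [mul_eq_mul_of_oja_equilibrium hU, Matrix.mul_assoc]
    _ = Vᵀ * A * V * Vᵀ * U := by
        rw [← transpose_mul_eq_of_oja_equilibrium hV, Matrix.mul_assoc]
    _ = Vᵀ * A * V * (Vᵀ * U) := Matrix.mul_assoc _ _ _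

theorem transfer_function_eq_of_mul_eq_mul {K : Type*} [CommRing K] {μ ν : Type*}
    {X Y R : Matrix ι ι K} (hR : IsUnit R) (hRXY : R * X = Y * R) (s : K)
    (hs : IsUnit (s • 1 - X)) (C : Matrix ν ι K) (B : Matrix ι μ K) :
    IsUnit (s • 1 - Y) ∧ C * (s • 1 - X)⁻¹ * R⁻¹ * B = C * R⁻¹ * (s • 1 - Y)⁻¹ * B := by
  have hRdet : IsUnit R.det := (isUnit_iff_isUnit_det R).mp hR
  have hconj : s • 1 - Y = R * (s • 1 - X) * R⁻¹ := by
    rw [← mul_nonsing_inv_cancel_right R (s • 1 - Y) hRdet, sub_mul, mul_sub, hRXY,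
      smul_one_mul, mul_smul_one]
  refine ⟨hconj ▸ (hR.mul hs).mul (isUnit_nonsing_inv_iff.mpr hR), ?_⟩
  rw [hconj, mul_inv_rev, mul_inv_rev, nonsing_inv_nonsing_inv R hRdet]
  simp only [Matrix.mul_assoc, nonsing_inv_mul_cancel_left R _ hRdet]

end Matrix

theorem reduced_models_same_transfer_function
    (n r m p : ℕ)
    (A : Matrix (Fin n) (Fin n) ℝ)
    (Ub : Matrix (Fin n) (Fin r) ℝ)
    (hUbeq : (1 - Ub * Ubᵀ) * A * Ub = 0)
    (Vb : Matrix (Fin n) (Fin r) ℝ)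
    (hVbeq : (1 - Vb * Vbᵀ) * Aᵀ * Vb = 0)
    (hR : IsUnit (Vbᵀ * Ub))
    (AU AV R : Matrix (Fin r) (Fin r) ℂ)
    (BV : Matrix (Fin r) (Fin m) ℂ) (CU : Matrix (Fin p) (Fin r) ℂ)
    (hAU : AU = (Ubᵀ * A * Ub).map (Complex.ofReal ·))
    (hAV : AV = (Vbᵀ * A * Vb).map (Complex.ofReal ·))
    (hRdef : R = (Vbᵀ * Ub).map (Complex.ofReal ·)) :
    ∀ s : ℂ, IsUnit (s • (1 : Matrix (Fin r) (Fin r) ℂ) - AU) →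
      IsUnit (s • (1 : Matrix (Fin r) (Fin r) ℂ) - AV) ∧
      CU * (s • (1 : Matrix (Fin r) (Fin r) ℂ) - AU)⁻¹ * R⁻¹ * BV =
        CU * R⁻¹ * (s • (1 : Matrix (Fin r) (Fin r) ℂ) - AV)⁻¹ * BV := by
  intro s hs
  have hRC : IsUnit R := hRdef ▸ hR.map Complex.ofRealHom.mapMatrix
  have hRAU : R * AU = AV * R := by
    have h := congrArg Complex.ofRealHom.mapMatrix (oja_equilibria_intertwine hUbeq hVbeq)
    rw [map_mul, map_mul] at h
    rw [hAU, hAV, hRdef]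
    exact h
  exact transfer_function_eq_of_mul_eq_mul hRC hRAU s hs CU BV
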